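/- Conjugate symmetry optimization identity: let m, p, n be positive, q = np, f : Fin (pm) → ℂ, and for fixed v ∈ {1,...,n-1} define A_{s,t,v} = ζ_q^{vt}·Re(f_{tm+s}) and B_{s,t,v} = i·ζ_q^{vt}·Im(f_{tm+s}). Then F_{qℓ+un+v} = ∑_{s=0}^{m-1} ζ_m^{ℓs} ζ_{qm}^{(un+v)s} ∑_{t=0}^{p-1} ζ_p^{ut}(A_{s,t,v} + B_{s,t,v}) and F_{qℓ+un-v} = ∑_{s=0}^{m-1} ζ_m^{ℓs} ζ_{qm}^{(un-v)s} ∑_{t=0}^{p-1} ζ_p^{ut}( conj(A_{s,t,v}) - conj(B_{s,t,v}) ), where subscripts of F are taken modulo qm. -/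

import Mathlib

open Finset Complex

/-- The primitive root of unity `exp(2πi/N)`. -/
noncomputable def zeta (N : ℕ) : ℂ := Complex.exp (2 * Real.pi * Complex.I / N)

lemma zeta_ne_zero (N : ℕ) : zeta N ≠ 0 := Complex.exp_ne_zero _

lemma zeta_pow_self (N : ℕ) (hN : (N : ℂ) ≠ 0) : zeta N ^ N = 1 := by
  rw [zeta, ← Complex.exp_nat_mul]
  have h : (N : ℂ) * (2 * Real.pi * Complex.I / N) = 2 * Real.pi * Complex.I := by
    field_simp
  rw [h, Complex.exp_two_pi_mul_I]

lemma zeta_mul_pow (a b : ℕ) (ha : (a : ℂ) ≠ 0) (hb : (b : ℂ) ≠ 0) :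
    zeta (a * b) ^ b = zeta a := by
  rw [zeta, zeta, ← Complex.exp_nat_mul]
  congr 1
  push_cast
  field_simp

lemma conj_zeta (N : ℕ) : (starRingEnd ℂ) (zeta N) = (zeta N)⁻¹ := by
  rw [zeta, ← Complex.exp_conj, ← Complex.exp_neg]
  congr 1
  simp [map_div₀, Complex.conj_I, map_ofNat]
  ring

lemma conj_zeta_pow' (N e : ℕ) :
    (starRingEnd ℂ) (zeta N ^ e) = zeta N ^ (-(e : ℤ)) := by
  rw [map_pow, conj_zeta, inv_pow, zpow_neg, zpow_natCast]

lemma sum_range_mul_split (g : ℕ → ℂ) (p m : ℕ) :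
    ∑ j ∈ Finset.range (p * m), g j
      = ∑ t ∈ Finset.range p, ∑ s ∈ Finset.range m, g (t * m + s) := by
  induction p with
  | zero => simp
  | succ p ih =>
      rw [Nat.succ_mul, Finset.sum_range_add, ih, Finset.sum_range_succ]

lemma step' (N : ℕ) (hN : (N : ℂ) ≠ 0) (E a b c d k : ℤ) (z : ℂ)
    (h : E = a + b + c + d + N * k) :
    zeta N ^ E * z = zeta N ^ a * zeta N ^ b * (zeta N ^ c * (zeta N ^ d * z)) := by
  have hz : zeta N ≠ 0 := zeta_ne_zero N
  rw [h, zpow_add₀ hz, zpow_add₀ hz, zpow_add₀ hz, zpow_add₀ hz, zpow_mul, zpow_natCast,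
    zeta_pow_self N hN, one_zpow, mul_one]
  ring

/-- Conjugate symmetry optimization identity: with `q = n*p`,
`A_{s,t,v} = ζ_q^{vt}·Re(f_{tm+s})`, `B_{s,t,v} = i·ζ_q^{vt}·Im(f_{tm+s})`, the
residues `un+v` and `un-v` of the padded DFT (indices of `F` taken modulo `qm`,
realized by indexing `F` by integers) satisfy the two stated identities. -/
theorem stmt12 (m p n q : ℕ) (hm : 0 < m) (hp : 0 < p) (hn : 0 < n) (hq : q = n * p)
    (f : ℕ → ℂ)
    (F : ℤ → ℂ)
    (hF : ∀ k : ℤ, F k = ∑ j ∈ Finset.range (p * m), zeta (q * m) ^ (k * j) * f j)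
    (A B : ℕ → ℕ → ℕ → ℂ)
    (hA : ∀ s t v, A s t v = zeta q ^ (v * t) * ((f (t * m + s)).re : ℂ))
    (hB : ∀ s t v, B s t v = Complex.I * zeta q ^ (v * t) * ((f (t * m + s)).im : ℂ))
    (ℓ u v : ℕ) (hℓ : ℓ < m) (hu : u < p) (hv1 : 1 ≤ v) (hv : v < n) :
    F (q * ℓ + u * n + v) =
      (∑ s ∈ Finset.range m, zeta m ^ (ℓ * s) * zeta (q * m) ^ ((u * n + v) * s) *
        ∑ t ∈ Finset.range p, zeta p ^ (u * t) * (A s t v + B s t v)) ∧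
    F ((q * ℓ + u * n : ℤ) - v) =
      ∑ s ∈ Finset.range m, zeta m ^ (ℓ * s) *
        zeta (q * m) ^ (((u * n : ℤ) - v) * s) *
        ∑ t ∈ Finset.range p, zeta p ^ (u * t) *
          (starRingEnd ℂ (A s t v) - starRingEnd ℂ (B s t v)) := by
  subst hq
  have hm' : (m : ℂ) ≠ 0 := Nat.cast_ne_zero.2 hm.ne'
  have hp' : (p : ℂ) ≠ 0 := Nat.cast_ne_zero.2 hp.ne'
  have hn' : (n : ℂ) ≠ 0 := Nat.cast_ne_zero.2 hn.ne'
  have hnp' : ((n * p : ℕ) : ℂ) ≠ 0 := by push_cast; exact mul_ne_zero hn' hp'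
  have hnm' : ((n * m : ℕ) : ℂ) ≠ 0 := by push_cast; exact mul_ne_zero hn' hm'
  have hN : ((n * p * m : ℕ) : ℂ) ≠ 0 := by push_cast; exact mul_ne_zero (mul_ne_zero hn' hp') hm'
  have h1 : zeta m = zeta (n * p * m) ^ (n * p) := by
    rw [show n * p * m = m * (n * p) by ring, zeta_mul_pow m (n * p) hm' hnp']
  have h2 : zeta p = zeta (n * p * m) ^ (n * m) := by
    rw [show n * p * m = p * (n * m) by ring, zeta_mul_pow p (n * m) hp' hnm']
  have h3 : zeta (n * p) = zeta (n * p * m) ^ m := by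
    rw [zeta_mul_pow (n * p) m hnp' hm']
  constructor
  · simp only [Finset.mul_sum]
    rw [Finset.sum_comm, hF, sum_range_mul_split]
    refine Finset.sum_congr rfl fun t ht => Finset.sum_congr rfl fun s hs => ?_
    have hz : ((f (t * m + s)).re : ℂ) + ((f (t * m + s)).im : ℂ) * Complex.I
        = f (t * m + s) := Complex.re_add_im _
    have hab : A s t v + B s t v = zeta (n * p) ^ (v * t) * f (t * m + s) := by
      rw [hA, hB]
      linear_combination zeta (n * p) ^ (v * t) * hz
    rw [hab, h1, h2, h3, ← pow_mul, ← pow_mul, ← pow_mul,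
      ← zpow_natCast (zeta (n * p * m)) (n * p * (ℓ * s)),
      ← zpow_natCast (zeta (n * p * m)) ((u * n + v) * s),
      ← zpow_natCast (zeta (n * p * m)) (n * m * (u * t)),
      ← zpow_natCast (zeta (n * p * m)) (m * (v * t))]
    apply step' _ hN _ _ _ _ _ ((ℓ : ℤ) * t)
    push_cast
    ring
  · simp only [Finset.mul_sum]
    rw [Finset.sum_comm, hF, sum_range_mul_split]
    refine Finset.sum_congr rfl fun t ht => Finset.sum_congr rfl fun s hs => ?_
    have hz : ((f (t * m + s)).re : ℂ) + ((f (t * m + s)).im : ℂ) * Complex.I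
        = f (t * m + s) := Complex.re_add_im _
    have hab : (starRingEnd ℂ) (A s t v) - (starRingEnd ℂ) (B s t v)
        = zeta (n * p) ^ (-(v * t : ℕ) : ℤ) * f (t * m + s) := by
      rw [hA, hB, map_mul, map_mul, map_mul, conj_zeta_pow', Complex.conj_I,
        Complex.conj_ofReal, Complex.conj_ofReal]
      linear_combination zeta (n * p) ^ (-(v * t : ℕ) : ℤ) * hz
    rw [hab, h1, h2, h3, ← pow_mul, ← pow_mul,
      ← zpow_natCast (zeta (n * p * m)) (n * p * (ℓ * s)),
      ← zpow_natCast (zeta (n * p * m)) (n * m * (u * t)),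
      show (zeta (n * p * m) ^ m) ^ (-(v * t : ℕ) : ℤ)
        = zeta (n * p * m) ^ ((m : ℤ) * (-(v * t : ℕ) : ℤ)) by
          rw [← zpow_natCast (zeta (n * p * m)) m, ← zpow_mul]]
    apply step' _ hN _ _ _ _ _ ((ℓ : ℤ) * t)
    push_cast
    ring
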